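/- arXiv:2103.02994 — 2 statements merged into one kernel-verified Lean document; each statement's English description precedes it below -/
import Mathlib

section
/- For every convex body K ⊂ ℝⁿ (n ≥ 2) containing the origin in its interior, there exists a unit vector ξ ∈ S^{n−1} such that ∫_K ⟨∇‖x‖_K(x), ξ⟩⁴ dx ≥ (3n/(n+2)) · (∫_K ⟨∇‖x‖_K(x), ξ⟩² dx)² / V(K), where the integrals are with respect to Lebesgue measure on K and V(K) is the volume of K. Equivalently, ∫_{S^{n−1}} lin_{K,ξ}⁴ dV_K ≥ (3n/(n+2)) · (∫_{S^{n−1}} lin_{K,ξ}² dV_K)²/V(K). -/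
open MeasureTheory Set Filter
open scoped Pointwise ENNReal NNReal Topology

noncomputable section

/-- Euclidean space `ℝⁿ`. -/
abbrev Euc (n : ℕ) : Type := EuclideanSpace ℝ (Fin n)

variable {n : ℕ}

/-- The unit sphere `S^{n-1}`. -/
def sph (n : ℕ) : Set (Euc n) := Metric.sphere 0 1

/-- A convex body containing the origin in its interior (the class `𝒦`). -/
def IsBody (K : Set (Euc n)) : Prop :=
  Convex ℝ K ∧ IsCompact K ∧ (0 : Euc n) ∈ interior K

/-- Origin-symmetric set (`𝒦ₑ` members). -/
def IsOriginSymm (K : Set (Euc n)) : Prop := K = -K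

/-- Support function `h_K`. -/
def suppFn (K : Set (Euc n)) (x : Euc n) : ℝ :=
  sSup ((fun y => (inner ℝ x y : ℝ)) '' K)

/-- The (a.e. defined) Gauss-type map `x ↦ ∇‖x‖_K / |∇‖x‖_K|`. -/
def gaussMap (K : Set (Euc n)) (x : Euc n) : Euc n :=
  ‖gradient (gauge K) x‖⁻¹ • gradient (gauge K) x

/-- Cone-volume measure `V_K`: pushforward of Lebesgue measure on `K` under the Gauss map. -/
def coneVol (K : Set (Euc n)) : Measure (Euc n) :=
  Measure.map (gaussMap K) (volume.restrict K)

/-- Surface-area measure `S_K`: pushforward of the `(n-1)`-dimensional Hausdorff measure on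
`∂K` under the Gauss map. -/
def surfArea (K : Set (Euc n)) : Measure (Euc n) :=
  Measure.map (gaussMap K)
    ((Measure.hausdorffMeasure ((n : ℝ) - 1)).restrict (frontier K))

/-- `L^p` surface-area measure `S_p K = h_K^{1-p} S_K`. -/
def SpM (K : Set (Euc n)) (p : ℝ) : Measure (Euc n) :=
  (surfArea K).withDensity fun θ => ENNReal.ofReal (suppFn K θ ^ (1 - p))

/-- Volume. -/
def vol (K : Set (Euc n)) : ℝ := (volume K).toReal

/-- The `K`-adapted linear functional `lin_{K,ξ}(θ) = ⟨θ,ξ⟩ / h_K(θ)`. -/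
def linK (K : Set (Euc n)) (ξ θ : Euc n) : ℝ := (inner ℝ θ ξ : ℝ) / suppFn K θ

/-- The Wulff shape (Alexandrov body) of a function `ψ` on the sphere:
`{x : ⟨x,θ⟩ ≤ ψ(θ) ∀ θ ∈ S^{n-1}}`; recovers `K` from `h_K`. -/
def wulff (ψ : Euc n → ℝ) : Set (Euc n) := {x | ∀ θ ∈ sph n, (inner ℝ x θ : ℝ) ≤ ψ θ}

/-- Mixed volume `V(L[m], K[n-m])`, defined via the coefficients of the polynomial
`t ↦ V(K + tL) = Σ_m binom(n,m) V(L[m],K[n-m]) t^m` (extracted as a one-sided derivative). -/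
def mixedVolBody (m : ℕ) (K L : Set (Euc n)) : ℝ :=
  ((n.choose m : ℝ) * (Nat.factorial m : ℝ))⁻¹ *
    iteratedDerivWithin m (fun t : ℝ => vol (K + t • L)) (Set.Ici 0) 0

/-- Mixed volume `V(φ[m], h_K[n-m])` of a difference of support functions `φ` with `K`,
via the expansion of `t ↦ V(wulff (h_K + tφ))` for `t ≥ 0`. -/
def mixedVolFn (K : Set (Euc n)) (φ : Euc n → ℝ) (m : ℕ) : ℝ :=
  ((n.choose m : ℝ) * (Nat.factorial m : ℝ))⁻¹ *
    iteratedDerivWithin m (fun t : ℝ => vol (wulff fun θ => suppFn K θ + t * φ θ))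
      (Set.Ici 0) 0

/-- Dirichlet energy `∫ |∇z|²_{g_K} dV_K` of the Hilbert--Brunn--Minkowski operator, via the
integration-by-parts identity `∫ |∇z|²_{g_K} dV_K = (n-1)(∫ z² dV_K - V(zh_K,zh_K,h_K[n-2]))`. -/
def dirEnergy (K : Set (Euc n)) (z : Euc n → ℝ) : ℝ :=
  ((n : ℝ) - 1) *
    ((∫ θ, (z θ) ^ 2 ∂coneVol K) - mixedVolFn K (fun θ => z θ * suppFn K θ) 2)

/-- Variance `Var_{V_K}(z) = ∫ z² dV_K - (∫ z dV_K)²/V(K)`. -/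
def varV (K : Set (Euc n)) (z : Euc n → ℝ) : ℝ :=
  (∫ θ, (z θ) ^ 2 ∂coneVol K) - (∫ θ, z θ ∂coneVol K) ^ 2 / vol K

/-- A function on `ℝⁿ` representing a `C²` function on the sphere via its `0`-homogeneous
extension. -/
def IsC2Sphere (z : Euc n → ℝ) : Prop :=
  ContDiffOn ℝ 2 z ({(0 : Euc n)}ᶜ) ∧ ∀ t : ℝ, 0 < t → ∀ x, z (t • x) = z x

/-- Even function. -/
def IsEvenFn (z : Euc n → ℝ) : Prop := ∀ x, z (-x) = z x

/-- Non-constant on the sphere. -/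
def NonConstOnSph (z : Euc n → ℝ) : Prop :=
  ∃ θ₁ ∈ sph n, ∃ θ₂ ∈ sph n, z θ₁ ≠ z θ₂

/-- First nonzero even eigenvalue `λ_{1,e}(-Δ_K)` of the Hilbert--Brunn--Minkowski operator:
the infimum of the Rayleigh quotients over even non-constant `C²` functions on the sphere. -/
def lambda1e (K : Set (Euc n)) : ℝ :=
  sInf { r : ℝ | ∃ z : Euc n → ℝ, IsC2Sphere z ∧ IsEvenFn z ∧ NonConstOnSph z ∧
    r = dirEnergy K z / varV K z }

/-- The class `𝒦²₊`: `h_K` is `C²` away from the origin and the restriction of `∇²h_K(x)`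
to directions transversal to `x` is positive definite (strictly positive curvature). -/
def IsK2plus (K : Set (Euc n)) : Prop :=
  IsBody K ∧ ContDiffOn ℝ 2 (suppFn K) ({(0 : Euc n)}ᶜ) ∧
    ∀ x : Euc n, x ≠ 0 → ∀ v : Euc n, v ∉ Submodule.span ℝ ({x} : Set (Euc n)) →
      0 < fderiv ℝ (fun y => fderiv ℝ (suppFn K) y v) x v

/-- A centered ellipsoid: image of the Euclidean unit ball under a nonsingular linear map. -/
def IsCenteredEllipsoid (K : Set (Euc n)) : Prop :=
  ∃ T : Euc n ≃ₗ[ℝ] Euc n, K = T '' Metric.closedBall 0 1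

/-- Tangential body to a centered Euclidean ball. -/
def IsTangentialBody (K : Set (Euc n)) : Prop :=
  ∃ R : ℝ, 0 < R ∧ ∃ S : Set (Euc n), IsClosed S ∧ S ⊆ sph n ∧
    K = ⋂ θ ∈ S, {x : Euc n | (inner ℝ x θ : ℝ) ≤ R}

/-- The uniform (rotation-invariant) surface measure on the sphere `S^{m-1}`. -/
def sphMeas (m : ℕ) : Measure (Euc m) :=
  (Measure.hausdorffMeasure ((m : ℝ) - 1)).restrict (sph m)

/-- A finite Borel measure on the sphere is isotropic. -/
def IsIsotropic (μ : Measure (Euc n)) : Prop :=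
  ∀ u : Euc n, (∫ x, (inner ℝ x u : ℝ) ^ 2 ∂μ) = ‖u‖ ^ 2 / n * (μ Set.univ).toReal

/-- Putterman's mixed-volume variant `λ^C_{1,e}(K)` of the first nonzero even eigenvalue. -/
def lambdaC1e (K : Set (Euc n)) : ℝ :=
  ((n : ℝ) - 1) * sInf { r : ℝ | ∃ L : Set (Euc n), IsBody L ∧ IsOriginSymm L ∧
    ¬ (∃ c : ℝ, ∀ᵐ θ ∂coneVol K, suppFn L θ / suppFn K θ = c) ∧
    r = ((∫ θ, (suppFn L θ / suppFn K θ) ^ 2 ∂coneVol K) - mixedVolBody 2 K L) /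
        ((∫ θ, (suppFn L θ / suppFn K θ) ^ 2 ∂coneVol K) -
          (mixedVolBody 1 K L) ^ 2 / vol K) }

/-- The functional `F_{μ,p}` of the variational approach to the even `L^p`-Minkowski problem. -/
def Fmu (μ : Measure (Euc n)) (p : ℝ) (K : Set (Euc n)) : ℝ :=
  if p = 0 then
    Real.exp ((∫ θ, Real.log (suppFn K θ) ∂μ) / (μ Set.univ).toReal) /
      vol K ^ ((1 : ℝ) / n)
  else (1 / p) * (∫ θ, suppFn K θ ^ p ∂μ) / vol K ^ (p / n)

/-- `m`-th `C²ₑ`-variation `δ^m_K F(z) = (d/dε)^m|₀ F(K_ε)` where `h_{K_ε} = h_K (1 + ε z)`. -/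
def deltaVar (F : Set (Euc n) → ℝ) (K : Set (Euc n)) (m : ℕ) (z : Euc n → ℝ) : ℝ :=
  iteratedDeriv m (fun ε : ℝ => F (wulff fun θ => suppFn K θ * (1 + ε * z θ))) 0

/-- A nonzero finite even Borel measure supported on the sphere. -/
def IsEvenMeasureOnSphere (μ : Measure (Euc n)) : Prop :=
  μ ((sph n)ᶜ) = 0 ∧ Measure.map (fun x : Euc n => -x) μ = μ

/-- Local minimum point of `F_{μ,p}` on `𝒦ₑ` with respect to the Hausdorff metric. -/
def IsLocalMinKe (μ : Measure (Euc n)) (p : ℝ) (K : Set (Euc n)) : Prop :=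
  IsBody K ∧ IsOriginSymm K ∧ ∃ ε : ℝ, 0 < ε ∧ ∀ L : Set (Euc n), IsBody L → IsOriginSymm L →
    Metric.hausdorffDist K L < ε → Fmu μ p K ≤ Fmu μ p L

/-- Local maximum point of `F_{μ,p}` on `𝒦ₑ` with respect to the Hausdorff metric. -/
def IsLocalMaxKe (μ : Measure (Euc n)) (p : ℝ) (K : Set (Euc n)) : Prop :=
  IsBody K ∧ IsOriginSymm K ∧ ∃ ε : ℝ, 0 < ε ∧ ∀ L : Set (Euc n), IsBody L → IsOriginSymm L →
    Metric.hausdorffDist K L < ε → Fmu μ p L ≤ Fmu μ p K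

/-- Geometric distance `d_G(K, B₂ⁿ) = inf{ab : (1/b)B₂ⁿ ⊆ K ⊆ aB₂ⁿ}`. -/
def geomDistBall (K : Set (Euc n)) : ℝ :=
  sInf { d : ℝ | ∃ a b : ℝ, 0 < a ∧ 0 < b ∧ d = a * b ∧
    b⁻¹ • Metric.closedBall (0 : Euc n) 1 ⊆ K ∧ K ⊆ a • Metric.closedBall (0 : Euc n) 1 }

/-- The LYZ body `Γ_{-p}K` (whose gauge is `(n/V(K)) ∫ |lin_{K,x}|^p dV_K)^{1/p}`)
is a centered Euclidean ball. -/
def gammaIsBall (K : Set (Euc n)) (p : ℝ) : Prop :=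
  ∃ c : ℝ, 0 < c ∧ ∀ x : Euc n,
    ((n : ℝ) / vol K) * (∫ θ, |linK K x θ| ^ p ∂coneVol K) = c * ‖x‖ ^ p

end

/-!
Push `V_K` forward under `θ ↦ θ / h_K(θ)` to a finite measure `ν` of bounded support, so that
`∫ lin_{K,ξ}^k dV_K = M_k(ξ) := ∫ ⟪z, ξ⟫^k dν`. If the second-moment form
`(x, y) ↦ ∫ ⟪z, x⟫ ⟪z, y⟫ dν` has a null vector, that direction works. Otherwise choose
`u₁, …, u_n` orthonormal for it and test the directions `uᵢ` and `∑ ±uᵢ`, for which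
`M₂ = 1` and `M₂ = n`. Integrating `2 ∑ aᵢ⁴ + 2⁻ⁿ ∑_± (∑ ±aᵢ)⁴ = 3 (∑ aᵢ²)²` at `aᵢ = ⟪z, uᵢ⟫`
gives `2 ∑ M₄(uᵢ) + 2⁻ⁿ ∑_± M₄(∑ ±uᵢ) = 3 ∫ ρ²` with `ρ = ∑ ⟪z, uᵢ⟫²`, and Cauchy–Schwarz gives
`V(K) ∫ ρ² ≥ (∫ ρ)² = n²`. If every test direction had `V(K) M₄ < 3n/(n+2) M₂²`, the same
weighted sum would be `< 3n²/V(K)`, a contradiction.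
-/

open InnerProductSpace ProbabilityTheory Module
open scoped RealInnerProductSpace

def boolSign (b : Bool) : ℝ := if b then 1 else -1

lemma boolSign_sq (b : Bool) : boolSign b ^ 2 = 1 := by cases b <;> simp [boolSign]

lemma sum_boolSign_succ (m : ℕ) (a : Fin (m + 1) → ℝ) (p : ℝ → ℝ) :
    ∑ ε : Fin (m + 1) → Bool, p (∑ i, boolSign (ε i) * a i) =
      ∑ ε : Fin m → Bool, (p (a 0 + ∑ i, boolSign (ε i) * a i.succ) +
        p (-a 0 + ∑ i, boolSign (ε i) * a i.succ)) := by
  rw [← (Fin.consEquiv fun _ => Bool).sum_comp, Fintype.sum_prod_type, Fintype.sum_bool,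
    ← Finset.sum_add_distrib]
  simp [Fin.consEquiv, Fin.sum_univ_succ, boolSign]

lemma sum_boolSign_sq (d : ℕ) (a : Fin d → ℝ) :
    ∑ ε : Fin d → Bool, (∑ i, boolSign (ε i) * a i) ^ 2 = 2 ^ d * ∑ i, a i ^ 2 := by
  induction d with
  | zero => simp
  | succ m ih =>
    have h (s : ℝ) : (a 0 + s) ^ 2 + (-a 0 + s) ^ 2 = 2 * s ^ 2 + 2 * a 0 ^ 2 := by ring
    rw [sum_boolSign_succ m a (· ^ 2)]
    simp only [h, Finset.sum_add_distrib, ← Finset.mul_sum, ih fun i => a i.succ,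
      Finset.sum_const, Finset.card_univ, Fintype.card_fun, Fintype.card_bool, Fintype.card_fin,
      nsmul_eq_mul, Fin.sum_univ_succ (fun i => a i ^ 2)]
    push_cast
    ring

lemma sum_boolSign_pow_four (d : ℕ) (a : Fin d → ℝ) :
    ∑ ε : Fin d → Bool, (∑ i, boolSign (ε i) * a i) ^ 4 =
      2 ^ d * (3 * (∑ i, a i ^ 2) ^ 2 - 2 * ∑ i, a i ^ 4) := by
  induction d with
  | zero => simp
  | succ m ih =>
    have h (s : ℝ) : (a 0 + s) ^ 4 + (-a 0 + s) ^ 4 =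
        2 * s ^ 4 + 12 * a 0 ^ 2 * s ^ 2 + 2 * a 0 ^ 4 := by ring
    rw [sum_boolSign_succ m a (· ^ 4)]
    simp only [h, Finset.sum_add_distrib, ← Finset.mul_sum, ih fun i => a i.succ,
      sum_boolSign_sq m fun i => a i.succ, Finset.sum_const, Finset.card_univ,
      Fintype.card_fun, Fintype.card_bool, Fintype.card_fin, nsmul_eq_mul,
      Fin.sum_univ_succ (fun i => a i ^ 2), Fin.sum_univ_succ (fun i => a i ^ 4)]
    push_cast
    ring

lemma two_mul_sum_pow_four_add_avg_boolSign (d : ℕ) (a : Fin d → ℝ) :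
    2 * ∑ i, a i ^ 4 + (2 ^ d)⁻¹ * ∑ ε : Fin d → Bool, (∑ i, boolSign (ε i) * a i) ^ 4 =
      3 * (∑ i, a i ^ 2) ^ 2 := by
  rw [sum_boolSign_pow_four, inv_mul_cancel_left₀ (by positivity)]
  ring

section Moments

variable {α : Type*} [MeasurableSpace α] {μ : Measure α} [IsFiniteMeasure μ] {d : ℕ}
  {f : Fin d → α → ℝ}

lemma sq_integral_le_measureReal_univ_mul_integral_sq {f : α → ℝ}
    (hf : Integrable f μ) (hf2 : Integrable (fun a => f a ^ 2) μ) :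
    (∫ a, f a ∂μ) ^ 2 ≤ μ.real univ * ∫ a, f a ^ 2 ∂μ := by
  rcases eq_zero_or_neZero μ with rfl | _
  · simp
  have hV : 0 < μ.real univ := measureReal_univ_pos
  have jensen := (even_two.convexOn_pow (𝕜 := ℝ)).map_average_le
    (continuous_pow 2).continuousOn isClosed_univ (ae_of_all _ fun _ => Set.mem_univ _) hf hf2
  simp only [average_eq, smul_eq_mul, mul_pow] at jensen
  rw [← mul_le_mul_iff_right₀ (pow_pos (inv_pos.2 hV) 2)]
  calc (μ.real univ)⁻¹ ^ 2 * (∫ a, f a ∂μ) ^ 2 ≤ (μ.real univ)⁻¹ * ∫ a, f a ^ 2 ∂μ := jensen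
    _ = (μ.real univ)⁻¹ ^ 2 * (μ.real univ * ∫ a, f a ^ 2 ∂μ) := by
      field_simp

lemma MeasureTheory.MemLp.integrable_pow_four {f : α → ℝ} (hf : MemLp f 4 μ) :
    Integrable (fun a => f a ^ 4) μ := by
  have := MemLp.integrable_norm_pow' (p := 4) (by exact_mod_cast hf)
  simpa only [Real.norm_eq_abs, (by decide : Even 4).pow_abs] using this

lemma integrable_sum_boolSign_mul_pow_four (hf : ∀ i, MemLp (f i) 4 μ) (ε : Fin d → Bool) :
    Integrable (fun a => (∑ i, boolSign (ε i) * f i a) ^ 4) μ :=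
  (memLp_finsetSum _ fun i _ => (hf i).const_mul (boolSign (ε i))).integrable_pow_four

lemma integrable_quartic_design (hf : ∀ i, MemLp (f i) 4 μ) :
    Integrable (fun a => 2 * ∑ i, f i a ^ 4 +
      (2 ^ d)⁻¹ * ∑ ε : Fin d → Bool, (∑ i, boolSign (ε i) * f i a) ^ 4) μ :=
  ((integrable_finsetSum _ fun i _ => (hf i).integrable_pow_four).const_mul _).add
    ((integrable_finsetSum _ fun ε _ => integrable_sum_boolSign_mul_pow_four hf ε).const_mul _)

lemma integrable_sq_sum_sq (hf : ∀ i, MemLp (f i) 4 μ) :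
    Integrable (fun a => (∑ i, f i a ^ 2) ^ 2) μ := by
  refine ((integrable_quartic_design hf).div_const 3).congr (ae_of_all _ fun a => ?_)
  simp only [two_mul_sum_pow_four_add_avg_boolSign]
  ring

lemma integral_quartic_design (hf : ∀ i, MemLp (f i) 4 μ) :
    2 * ∑ i, ∫ a, f i a ^ 4 ∂μ +
        (2 ^ d)⁻¹ * ∑ ε : Fin d → Bool, ∫ a, (∑ i, boolSign (ε i) * f i a) ^ 4 ∂μ =
      3 * ∫ a, (∑ i, f i a ^ 2) ^ 2 ∂μ := by
  have hf4 i := (hf i).integrable_pow_four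
  have hsign4 := integrable_sum_boolSign_mul_pow_four hf
  rw [← integral_const_mul, ← integral_finsetSum _ fun i _ => hf4 i,
    ← integral_finsetSum _ fun ε _ => hsign4 ε, ← integral_const_mul, ← integral_const_mul,
    ← integral_add ((integrable_finsetSum _ fun i _ => hf4 i).const_mul _)
      ((integrable_finsetSum _ fun ε _ => hsign4 ε).const_mul _)]
  simp only [two_mul_sum_pow_four_add_avg_boolSign]

end Moments

lemma LinearMap.BilinForm.IsPosSemidef.exists_self_eq_zero_or_orthonormal {V : Type*}
    [AddCommGroup V] [Module ℝ V] [FiniteDimensional ℝ V] {B : LinearMap.BilinForm ℝ V}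
    (hB : B.IsPosSemidef) :
    (∃ x ≠ 0, B x x = 0) ∨
      ∃ u : Fin (finrank ℝ V) → V, ∀ i j, B (u i) (u j) = if i = j then 1 else 0 := by
  obtain ⟨v, hv⟩ := LinearMap.BilinForm.exists_orthogonal_basis
    (LinearMap.BilinForm.isSymm_iff.1 hB.isSymm)
  by_cases h : ∃ i, B (v i) (v i) = 0
  · obtain ⟨i, hi⟩ := h
    exact Or.inl ⟨v i, v.ne_zero i, hi⟩
  push Not at h
  refine Or.inr ⟨fun i => (√(B (v i) (v i)))⁻¹ • v i, fun i j => ?_⟩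
  simp only [map_smul, LinearMap.smul_apply, smul_eq_mul]
  split_ifs with hij
  · subst hij
    have hpos := (hB.isNonneg.nonneg (v i)).lt_of_ne' (h i)
    field_simp
    rw [Real.sq_sqrt hpos.le]
  · rw [show B (v i) (v j) = 0 from hv hij, mul_zero, mul_zero]

section InnerProductSpace

variable {E : Type*} [NormedAddCommGroup E] [InnerProductSpace ℝ E] [MeasurableSpace E]
  {ν : Measure E}

noncomputable def directionalMoment (ν : Measure E) (k : ℕ) (ξ : E) : ℝ := ∫ z, ⟪z, ξ⟫ ^ k ∂ν

lemma directionalMoment_smul (k : ℕ) (c : ℝ) (ξ : E) :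
    directionalMoment ν k (c • ξ) = c ^ k * directionalMoment ν k ξ := by
  simp only [directionalMoment, inner_smul_right, mul_pow, integral_const_mul]

lemma directionalMoment_zero {k : ℕ} (hk : k ≠ 0) : directionalMoment ν k 0 = 0 := by
  simp [directionalMoment, hk]

lemma directionalMoment_two_nonneg (ξ : E) : 0 ≤ directionalMoment ν 2 ξ :=
  integral_nonneg fun _ => sq_nonneg _

lemma directionalMoment_four_nonneg (ξ : E) : 0 ≤ directionalMoment ν 4 ξ :=
  integral_nonneg fun _ => by positivity

variable [OpensMeasurableSpace E]

noncomputable def secondMomentForm (ν : Measure E) : LinearMap.BilinForm ℝ E :=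
  ((uncenteredCovarianceBilinDual ν).bilinearComp (toDualMap ℝ E).toContinuousLinearMap
    (toDualMap ℝ E).toContinuousLinearMap).toBilinForm

lemma secondMomentForm_apply (hν : MemLp id 2 ν) (x y : E) :
    secondMomentForm ν x y = ∫ z, ⟪z, x⟫ * ⟪z, y⟫ ∂ν := by
  simp [secondMomentForm, uncenteredCovarianceBilinDual_apply hν, real_inner_comm]

lemma secondMomentForm_self (hν : MemLp id 2 ν) (x : E) :
    secondMomentForm ν x x = directionalMoment ν 2 x := by
  simp [secondMomentForm_apply hν, directionalMoment, sq]

lemma isPosSemidef_secondMomentForm (hν : MemLp id 2 ν) : (secondMomentForm ν).IsPosSemidef where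
  isSymm := ⟨fun x y => by simp only [secondMomentForm_apply hν, mul_comm]⟩
  isNonneg := ⟨fun x => secondMomentForm_self hν x ▸ directionalMoment_two_nonneg x⟩

end InnerProductSpace

section Quartic

variable {E : Type*} [NormedAddCommGroup E] [InnerProductSpace ℝ E] [MeasurableSpace E]
  [OpensMeasurableSpace E] {ν : Measure E} {d : ℕ} {u : Fin d → E}

lemma directionalMoment_two_sum_smul (hν : MemLp id 2 ν)
    (hu : ∀ i j, secondMomentForm ν (u i) (u j) = if i = j then 1 else 0) (c : Fin d → ℝ) :
    directionalMoment ν 2 (∑ i, c i • u i) = ∑ i, c i ^ 2 := by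
  simp [← secondMomentForm_self hν, map_sum, hu, ← sq]

lemma directionalMoment_two_eq_one (hν : MemLp id 2 ν)
    (hu : ∀ i j, secondMomentForm ν (u i) (u j) = if i = j then 1 else 0) (i : Fin d) :
    directionalMoment ν 2 (u i) = 1 := by
  rw [← secondMomentForm_self hν, hu, if_pos rfl]

variable [IsFiniteMeasure ν]

lemma sq_le_measureReal_univ_mul_integral_sq_sum_sq (hν : MemLp id 4 ν)
    (hu : ∀ i j, secondMomentForm ν (u i) (u j) = if i = j then 1 else 0) :
    (d : ℝ) ^ 2 ≤ ν.real univ * ∫ z, (∑ i, ⟪z, u i⟫ ^ 2) ^ 2 ∂ν := by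
  have hν2 : MemLp id 2 ν := hν.mono_exponent (by norm_num)
  have hsq i : Integrable (fun z => ⟪z, u i⟫ ^ 2) ν := (hν2.inner_const (u i)).integrable_sq
  have hmean : ∫ z, ∑ i, ⟪z, u i⟫ ^ 2 ∂ν = d := by
    rw [integral_finsetSum _ fun i _ => hsq i]
    exact (Finset.sum_congr rfl fun i _ => directionalMoment_two_eq_one hν2 hu i).trans (by simp)
  exact hmean ▸ sq_integral_le_measureReal_univ_mul_integral_sq
    (integrable_finsetSum _ fun i _ => hsq i)
    (integrable_sq_sum_sq (f := fun i z => ⟪z, u i⟫) fun i => hν.inner_const (u i))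

theorem exists_directionalMoment_four_ge_of_orthonormal (hν : MemLp id 4 ν) [NeZero d]
    (hu : ∀ i j, secondMomentForm ν (u i) (u j) = if i = j then 1 else 0) :
    ∃ ζ, directionalMoment ν 2 ζ ≠ 0 ∧
      3 * d / (d + 2) * directionalMoment ν 2 ζ ^ 2 ≤ ν.real univ * directionalMoment ν 4 ζ := by
  have hν2 : MemLp id 2 ν := hν.mono_exponent (by norm_num)
  set V := ν.real univ
  set κ : ℝ := 3 * d / (d + 2)
  let w (ε : Fin d → Bool) : E := ∑ i, boolSign (ε i) • u i
  have hMu := directionalMoment_two_eq_one hν2 hu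
  have hMw ε : directionalMoment ν 2 (w ε) = d := by
    simp [w, directionalMoment_two_sum_smul hν2 hu, boolSign_sq]
  have hdesign := integral_quartic_design (f := fun i z => ⟪z, u i⟫) fun i => hν.inner_const (u i)
  have hM4w ε : ∫ z, (∑ i, boolSign (ε i) * ⟪z, u i⟫) ^ 4 ∂ν = directionalMoment ν 4 (w ε) := by
    simp [directionalMoment, w, inner_sum, inner_smul_right]
  simp only [hM4w] at hdesign
  change 2 * ∑ i, directionalMoment ν 4 (u i) + _ = _ at hdesign
  have hCS := sq_le_measureReal_univ_mul_integral_sq_sum_sq hν hu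
  by_contra! h
  have hu4 : V * ∑ i, directionalMoment ν 4 (u i) < d * κ := by
    have := Finset.sum_lt_sum_of_nonempty Finset.univ_nonempty fun i (_ : i ∈ Finset.univ) =>
      (by simpa [hMu] using h (u i) (by simp [hMu]) : V * directionalMoment ν 4 (u i) < κ)
    rwa [Finset.sum_const, Finset.card_univ, Fintype.card_fin, nsmul_eq_mul,
      ← Finset.mul_sum] at this
  have hw4 : (2 ^ d)⁻¹ * (V * ∑ ε, directionalMoment ν 4 (w ε)) < κ * d ^ 2 := by
    have := Finset.sum_lt_sum_of_nonempty Finset.univ_nonempty fun ε (_ : ε ∈ Finset.univ) =>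
      (by simpa [hMw] using h (w ε) (by simp [hMw, NeZero.ne]) :
        V * directionalMoment ν 4 (w ε) < κ * d ^ 2)
    rwa [Finset.sum_const, Finset.card_univ, Fintype.card_fun, Fintype.card_bool,
      Fintype.card_fin, nsmul_eq_mul, ← Finset.mul_sum, Nat.cast_pow, Nat.cast_ofNat,
      ← inv_mul_lt_iff₀ (by positivity)] at this
  have hκ : κ * d * (d + 2) = 3 * d ^ 2 := by
    simp only [κ]
    field_simp
  linarith [congrArg (V * ·) hdesign]

theorem exists_ne_zero_directionalMoment_four_ge [FiniteDimensional ℝ E] [Nontrivial E]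
    (hν : MemLp id 4 ν) :
    ∃ ζ ≠ 0, 3 * finrank ℝ E / (finrank ℝ E + 2) * directionalMoment ν 2 ζ ^ 2 ≤
      ν.real univ * directionalMoment ν 4 ζ := by
  have hν2 : MemLp id 2 ν := hν.mono_exponent (by norm_num)
  rcases (isPosSemidef_secondMomentForm hν2).exists_self_eq_zero_or_orthonormal with
    ⟨ζ, hζ, hnull⟩ | ⟨u, hu⟩
  · refine ⟨ζ, hζ, ?_⟩
    rw [← secondMomentForm_self hν2, hnull]
    simpa using mul_nonneg measureReal_nonneg (directionalMoment_four_nonneg ζ)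
  · have : NeZero (finrank ℝ E) := ⟨finrank_pos.ne'⟩
    obtain ⟨ζ, hζ, hineq⟩ := exists_directionalMoment_four_ge_of_orthonormal hν hu
    exact ⟨ζ, fun h0 => hζ (h0 ▸ directionalMoment_zero two_ne_zero), hineq⟩

theorem exists_norm_eq_one_directionalMoment_four_ge [FiniteDimensional ℝ E] [Nontrivial E]
    (hν : MemLp id 4 ν) :
    ∃ ξ : E, ‖ξ‖ = 1 ∧ 3 * finrank ℝ E / (finrank ℝ E + 2) * directionalMoment ν 2 ξ ^ 2 ≤
      ν.real univ * directionalMoment ν 4 ξ := by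
  obtain ⟨ζ, hζ, hineq⟩ := exists_ne_zero_directionalMoment_four_ge hν
  refine ⟨‖ζ‖⁻¹ • ζ, norm_smul_inv_norm hζ, ?_⟩
  rw [directionalMoment_smul, directionalMoment_smul]
  calc _ = ‖ζ‖⁻¹ ^ 4 * (3 * finrank ℝ E / (finrank ℝ E + 2) * directionalMoment ν 2 ζ ^ 2) := by
        ring
    _ ≤ ‖ζ‖⁻¹ ^ 4 * (ν.real univ * directionalMoment ν 4 ζ) := by gcongr
    _ = _ := by ring

end Quartic

section ConvexBody

variable {n : ℕ} {K : Set (Euc n)}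

lemma measurable_gaussMap (K : Set (Euc n)) : Measurable (gaussMap K) := by
  have hgrad : Measurable (gradient (gauge K)) :=
    (toDual ℝ (Euc n)).symm.continuous.measurable.comp (measurable_fderiv ℝ _)
  exact hgrad.norm.inv.smul hgrad

lemma coneVol_univ (K : Set (Euc n)) : coneVol K univ = volume K := by
  rw [coneVol, Measure.map_apply (measurable_gaussMap K) MeasurableSet.univ, preimage_univ,
    Measure.restrict_apply_univ]

lemma continuous_suppFn (hK : IsCompact K) : Continuous (suppFn K) :=
  hK.continuous_sSup continuous_inner

lemma mul_norm_le_suppFn (hK : IsCompact K) {r : ℝ} (hr : 0 ≤ r)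
    (hball : Metric.closedBall 0 r ⊆ K) (θ : Euc n) : r * ‖θ‖ ≤ suppFn K θ := by
  have hmem : (r / ‖θ‖) • θ ∈ K := hball <| by
    rcases eq_or_ne θ 0 with rfl | hθ
    · simpa using hr
    · simp [norm_smul, abs_of_nonneg hr, hθ]
  calc r * ‖θ‖ = ⟪θ, (r / ‖θ‖) • θ⟫ := by
        rcases eq_or_ne θ 0 with rfl | hθ
        · simp
        · rw [real_inner_smul_right, real_inner_self_eq_norm_sq]
          field_simp
    _ ≤ suppFn K θ :=
      le_csSup (hK.bddAbove_image (continuous_const.inner continuous_id).continuousOn)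
        ⟨_, hmem, rfl⟩

lemma norm_inv_suppFn_smul_le (hK : IsCompact K) {r : ℝ} (hr : 0 < r)
    (hball : Metric.closedBall 0 r ⊆ K) (θ : Euc n) : ‖(suppFn K θ)⁻¹ • θ‖ ≤ r⁻¹ := by
  rcases eq_or_ne θ 0 with rfl | hθ
  · simpa using hr.le
  have hθpos : 0 < r * ‖θ‖ := mul_pos hr (norm_pos_iff.2 hθ)
  have hsupp := mul_norm_le_suppFn hK hr.le hball θ
  rw [norm_smul, norm_inv, Real.norm_of_nonneg (hθpos.le.trans hsupp),
    inv_mul_le_iff₀ (hθpos.trans_le hsupp)]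
  calc ‖θ‖ = (r * ‖θ‖) * r⁻¹ := by field_simp
    _ ≤ suppFn K θ * r⁻¹ := by gcongr

lemma linK_eq_inner (K : Set (Euc n)) (ξ θ : Euc n) :
    linK K ξ θ = ⟪(suppFn K θ)⁻¹ • θ, ξ⟫ := by
  rw [linK, real_inner_smul_left, div_eq_inv_mul]

noncomputable def normalizedConeVol (K : Set (Euc n)) : Measure (Euc n) :=
  (coneVol K).map fun θ => (suppFn K θ)⁻¹ • θ

lemma measurable_inv_suppFn_smul (hK : IsCompact K) :
    Measurable fun θ : Euc n => (suppFn K θ)⁻¹ • θ :=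
  (continuous_suppFn hK).measurable.inv.smul measurable_id

lemma normalizedConeVol_univ (hK : IsCompact K) : normalizedConeVol K univ = volume K := by
  rw [normalizedConeVol, Measure.map_apply (measurable_inv_suppFn_smul hK) MeasurableSet.univ,
    preimage_univ, coneVol_univ]

lemma isFiniteMeasure_normalizedConeVol (hK : IsCompact K) :
    IsFiniteMeasure (normalizedConeVol K) :=
  ⟨(normalizedConeVol_univ hK).trans_lt hK.measure_lt_top⟩

lemma memLp_id_normalizedConeVol (hK : IsCompact K) (h0 : 0 ∈ interior K) (p : ℝ≥0∞) :
    MemLp id p (normalizedConeVol K) := by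
  obtain ⟨r, hr, hball⟩ :=
    Metric.nhds_basis_closedBall.mem_iff.1 (mem_interior_iff_mem_nhds.1 h0)
  have : IsFiniteMeasure (coneVol K) := ⟨(coneVol_univ K).trans_lt hK.measure_lt_top⟩
  have hφ := measurable_inv_suppFn_smul hK
  exact (memLp_map_measure_iff aestronglyMeasurable_id hφ.aemeasurable).2 <|
    .of_bound hφ.aestronglyMeasurable r⁻¹ (ae_of_all _ (norm_inv_suppFn_smul_le hK hr hball))

lemma directionalMoment_normalizedConeVol (hK : IsCompact K) (k : ℕ) (ξ : Euc n) :
    directionalMoment (normalizedConeVol K) k ξ = ∫ θ, linK K ξ θ ^ k ∂coneVol K := by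
  rw [directionalMoment, normalizedConeVol,
    integral_map (measurable_inv_suppFn_smul hK).aemeasurable (by fun_prop)]
  simp only [linK_eq_inner]

end ConvexBody

/-- **Theorem 1.2 (existence of a good direction).** For every convex body `K` containing the
origin in its interior, there is `ξ ∈ S^{n-1}` with
`∫ lin_{K,ξ}⁴ dV_K ≥ (3n/(n+2)) (∫ lin_{K,ξ}² dV_K)² / V(K)`. -/
theorem good_direction_exists {n : ℕ} (hn : 2 ≤ n) (K : Set (Euc n)) (hK : IsBody K) :
    ∃ ξ ∈ sph n,
      3 * (n : ℝ) / ((n : ℝ) + 2) * (∫ θ, linK K ξ θ ^ 2 ∂coneVol K) ^ 2 / vol K ≤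
        ∫ θ, linK K ξ θ ^ 4 ∂coneVol K := by
  have : Nontrivial (Euc n) :=
    Module.nontrivial_of_finrank_pos (by rw [finrank_euclideanSpace_fin]; omega)
  obtain ⟨-, hcomp, h0⟩ := hK
  have := isFiniteMeasure_normalizedConeVol hcomp
  obtain ⟨ξ, hξ, hineq⟩ :=
    exists_norm_eq_one_directionalMoment_four_ge (memLp_id_normalizedConeVol hcomp h0 4)
  rw [finrank_euclideanSpace_fin, measureReal_def, normalizedConeVol_univ hcomp,
    directionalMoment_normalizedConeVol hcomp, directionalMoment_normalizedConeVol hcomp]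
    at hineq
  exact ⟨ξ, by simpa [sph] using hξ, div_le_of_le_mul₀ ENNReal.toReal_nonneg
    (integral_nonneg fun θ => by positivity) (by rw [vol]; linarith)⟩
end

section
/- Let K ⊂ ℝⁿ (n ≥ 2) be a convex body containing the origin in its interior with (1/R)·B₂ⁿ ⊆ K for some R > 0, let p be a positive even integer, and let ξ ∈ S^{n−1}. Then the function ℝⁿ ∋ x ↦ (p−1)R^p · h_K(x) + ⟨x,ξ⟩^p / h_K(x)^{p−1} (set to 0 at the origin) is convex, positively 1-homogeneous and positive outside the origin; hence it is the support function of a convex body containing the origin in its interior. -/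
open MeasureTheory Set Filter
open scoped Pointwise ENNReal NNReal Topology

/-!
Write `g x = Φ(⟨x,ξ⟩, h_K x)` with `Φ(a, b) = (p-1)Rᵖ b + aᵖ / bᵖ⁻¹`; `Φ` is 1-homogeneous, and
`(⟨x,ξ⟩, h_K x)` lies in the cone `|a| ≤ R b` because `‖x‖ ≤ R h_K x`. On that cone `Φ` is
nondecreasing in `b` (Bernoulli's inequality), so the subadditivity of `h_K` may be fed in, and
`aᵖ / bᵖ⁻¹` is subadditive for `b > 0` (Radon's inequality: Jensen for `tᵖ` with weights
`bᵢ / (b₁ + b₂)`). Hence `g` is sublinear; since it is also comparable to the norm, Hahn–Banach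
shows that it is the support function of `{y | ∀ x, ⟨x,y⟩ ≤ g x}`.
-/

lemma Even.two_le_natCast {p : ℕ} (hpe : Even p) (hp : p ≠ 0) : (2 : ℝ) ≤ p := by
  obtain ⟨k, rfl⟩ := hpe
  norm_cast
  omega

lemma nat_mul_sub_le_pow_div_pow_sub_one {p : ℕ} (hp : p ≠ 0) {b b' : ℝ} (hb : 0 ≤ b)
    (hb' : 0 < b') : p * b - (p - 1) * b' ≤ b ^ p / b' ^ (p - 1) :=
  calc p * b - (p - 1) * b' = (1 + p * (b / b' - 1)) * b' := by field_simp; ring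
  _ ≤ (b / b') ^ p * b' :=
    mul_le_mul_of_nonneg_right (one_add_mul_sub_le_pow (by linarith [div_nonneg hb hb'.le]) p)
      hb'.le
  _ = b ^ p / b' ^ (p - 1) := by rw [div_pow, ← pow_sub_one_mul hp b']; field_simp

lemma pow_div_pow_sub_one_le {p : ℕ} (hpe : Even p) (hp : p ≠ 0) {R a b : ℝ} (hb : 0 ≤ b)
    (ha : |a| ≤ R * b) : a ^ p / b ^ (p - 1) ≤ R ^ p * b := by
  rcases hb.eq_or_lt with rfl | hb
  · obtain rfl : a = 0 := abs_nonpos_iff.1 (by simpa using ha)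
    simp [hp]
  rw [div_le_iff₀ (by positivity)]
  calc a ^ p = |a| ^ p := (hpe.pow_abs a).symm
  _ ≤ (R * b) ^ p := pow_le_pow_left₀ (abs_nonneg a) ha p
  _ = R ^ p * b * b ^ (p - 1) := by rw [mul_pow, ← pow_sub_one_mul hp b]; ring

lemma add_pow_div_add_pow_sub_one_le {p : ℕ} (hpe : Even p) (hp : p ≠ 0) {a₁ a₂ b₁ b₂ : ℝ}
    (hb₁ : 0 < b₁) (hb₂ : 0 < b₂) :
    (a₁ + a₂) ^ p / (b₁ + b₂) ^ (p - 1) ≤ a₁ ^ p / b₁ ^ (p - 1) + a₂ ^ p / b₂ ^ (p - 1) := by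
  have persp : ∀ a b : ℝ, 0 < b → a ^ p / b ^ (p - 1) = b * (a / b) ^ p := fun a b hb => by
    rw [div_pow, ← pow_sub_one_mul hp b]; field_simp
  have hb : 0 < b₁ + b₂ := add_pos hb₁ hb₂
  rw [persp _ _ hb₁, persp _ _ hb₂, persp _ _ hb]
  have jensen := hpe.convexOn_pow.2 (mem_univ (a₁ / b₁)) (mem_univ (a₂ / b₂))
    (div_nonneg hb₁.le hb.le) (div_nonneg hb₂.le hb.le) (by field_simp)
  simp only [smul_eq_mul] at jensen
  calc (b₁ + b₂) * ((a₁ + a₂) / (b₁ + b₂)) ^ p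
      = (b₁ + b₂) * (b₁ / (b₁ + b₂) * (a₁ / b₁) + b₂ / (b₁ + b₂) * (a₂ / b₂)) ^ p := by
        congr 2; field_simp
  _ ≤ (b₁ + b₂) * (b₁ / (b₁ + b₂) * (a₁ / b₁) ^ p + b₂ / (b₁ + b₂) * (a₂ / b₂) ^ p) :=
        mul_le_mul_of_nonneg_left jensen hb.le
  _ = b₁ * (a₁ / b₁) ^ p + b₂ * (a₂ / b₂) ^ p := by field_simp

lemma mul_add_pow_div_pow_sub_one_le_of_le {p : ℕ} (hpe : Even p) (hp : p ≠ 0) {R a b b' : ℝ}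
    (hb : 0 < b) (hbb' : b ≤ b') (ha : |a| ≤ R * b) :
    (p - 1) * R ^ p * b + a ^ p / b ^ (p - 1) ≤ (p - 1) * R ^ p * b' + a ^ p / b' ^ (p - 1) := by
  have hb' : 0 < b' := hb.trans_le hbb'
  have hap : a ^ p ≤ R ^ p * b ^ p := by
    rw [← mul_pow, ← hpe.pow_abs a]
    exact pow_le_pow_left₀ (abs_nonneg a) ha p
  have drop : a ^ p / b ^ (p - 1) - a ^ p / b' ^ (p - 1) ≤ R ^ p * (b - b ^ p / b' ^ (p - 1)) :=
    calc a ^ p / b ^ (p - 1) - a ^ p / b' ^ (p - 1)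
        = a ^ p * (1 / b ^ (p - 1) - 1 / b' ^ (p - 1)) := by ring
    _ ≤ R ^ p * b ^ p * (1 / b ^ (p - 1) - 1 / b' ^ (p - 1)) :=
        mul_le_mul_of_nonneg_right hap <| sub_nonneg.2 <|
          one_div_le_one_div_of_le (by positivity) (pow_le_pow_left₀ hb.le hbb' _)
    _ = R ^ p * (b - b ^ p / b' ^ (p - 1)) := by
        rw [← pow_sub_one_mul hp b]; field_simp
  have tangent := nat_mul_sub_le_pow_div_pow_sub_one hp hb.le hb'
  nlinarith [mul_le_mul_of_nonneg_left tangent (hpe.pow_nonneg R)]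

section Sublinear

variable {E : Type*} [AddCommGroup E] [Module ℝ E] {g : E → ℝ}

lemma apply_zero_of_smul_eq_mul (hsmul : ∀ t : ℝ, 0 < t → ∀ x, g (t • x) = t * g x) :
    g 0 = 0 := by
  have := hsmul 2 two_pos 0
  rw [smul_zero] at this
  linarith

lemma mul_le_apply_smul_of_sublinear (hsmul : ∀ t : ℝ, 0 < t → ∀ x, g (t • x) = t * g x)
    (hadd : ∀ x y, g (x + y) ≤ g x + g y) (t : ℝ) (x : E) : t * g x ≤ g (t • x) := by
  rcases lt_trichotomy t 0 with ht | rfl | ht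
  · have hsum : 0 ≤ g x + g (-x) := by
      simpa [apply_zero_of_smul_eq_mul hsmul] using hadd x (-x)
    have hneg : t • x = (-t) • (-x) := by rw [smul_neg, neg_smul, neg_neg]
    rw [hneg, hsmul (-t) (neg_pos.2 ht)]
    nlinarith
  · simp [apply_zero_of_smul_eq_mul hsmul]
  · rw [hsmul t ht]

lemma exists_linearMap_le_eq_of_sublinear
    (hsmul : ∀ t : ℝ, 0 < t → ∀ x, g (t • x) = t * g x)
    (hadd : ∀ x y, g (x + y) ≤ g x + g y) (x : E) :
    ∃ φ : E →ₗ[ℝ] ℝ, (∀ y, φ y ≤ g y) ∧ φ x = g x := by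
  have hx : ∀ c : ℝ, c • x = 0 → RingHom.id ℝ c • g x = 0 := by
    intro c hc
    rcases smul_eq_zero.1 hc with rfl | rfl
    · exact zero_smul ℝ _
    · rw [apply_zero_of_smul_eq_mul hsmul, smul_zero]
  set f := LinearPMap.mkSpanSingleton' x (g x) hx
  have hf : ∀ z : f.domain, f z ≤ g z := by
    rintro ⟨z, hz⟩
    obtain ⟨t, rfl⟩ := Submodule.mem_span_singleton.1 hz
    rw [LinearPMap.mkSpanSingleton'_apply, RingHom.id_apply, smul_eq_mul]
    exact mul_le_apply_smul_of_sublinear hsmul hadd t x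
  obtain ⟨φ, hφf, hφg⟩ := exists_extension_of_le_sublinear f g hsmul hadd hf
  exact ⟨φ, hφg, (hφf ⟨x, Submodule.mem_span_singleton_self x⟩).trans
    (LinearPMap.mkSpanSingleton'_apply_self _ _ hx _)⟩

lemma convexOn_univ_of_sublinear (hsmul : ∀ t : ℝ, 0 < t → ∀ x, g (t • x) = t * g x)
    (hadd : ∀ x y, g (x + y) ≤ g x + g y) : ConvexOn ℝ univ g := by
  refine ⟨convex_univ, fun x _ y _ a b ha hb hab => ?_⟩
  calc g (a • x + b • y) ≤ g (a • x) + g (b • y) := hadd _ _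
  _ ≤ a • g x + b • g y := by
      rcases ha.eq_or_lt with rfl | ha
      · obtain rfl : b = 1 := by linarith
        simp [apply_zero_of_smul_eq_mul hsmul]
      rcases hb.eq_or_lt with rfl | hb
      · obtain rfl : a = 1 := by linarith
        simp [apply_zero_of_smul_eq_mul hsmul]
      rw [hsmul a ha, hsmul b hb, smul_eq_mul, smul_eq_mul]

end Sublinear

section SupportFunction

variable {n : ℕ} {K : Set (Euc n)}

lemma inner_le_suppFn (hK : IsCompact K) (x : Euc n) {y : Euc n} (hy : y ∈ K) :
    inner ℝ x y ≤ suppFn K x :=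
  le_csSup (hK.image (continuous_const.inner continuous_id)).bddAbove (mem_image_of_mem _ hy)

lemma suppFn_smul {t : ℝ} (ht : 0 ≤ t) (x : Euc n) : suppFn K (t • x) = t * suppFn K x := by
  have : (fun y => inner ℝ (t • x) y) '' K = t • (fun y => inner ℝ x y) '' K := by
    rw [← image_smul, image_image]
    simp only [real_inner_smul_left, smul_eq_mul]
  rw [suppFn, this, Real.sSup_smul_of_nonneg ht, smul_eq_mul, suppFn]

lemma suppFn_add_le (hK : IsCompact K) (hne : K.Nonempty) (x y : Euc n) :
    suppFn K (x + y) ≤ suppFn K x + suppFn K y := by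
  refine csSup_le (hne.image _) ?_
  rintro _ ⟨z, hz, rfl⟩
  dsimp only
  rw [inner_add_left]
  exact add_le_add (inner_le_suppFn hK x hz) (inner_le_suppFn hK y hz)

lemma inv_mul_norm_le_suppFn (hK : IsCompact K) {R : ℝ}
    (hball : R⁻¹ • Metric.closedBall (0 : Euc n) 1 ⊆ K) (x : Euc n) :
    R⁻¹ * ‖x‖ ≤ suppFn K x := by
  have hy : R⁻¹ • (‖x‖⁻¹ • x) ∈ K := by
    refine hball (smul_mem_smul_set ?_)
    rw [mem_closedBall_zero_iff, norm_smul, norm_inv, norm_norm]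
    rcases eq_or_ne x 0 with rfl | hx
    · simp
    · rw [inv_mul_cancel₀ (norm_ne_zero_iff.2 hx)]
  have := inner_le_suppFn hK x hy
  rcases eq_or_ne x 0 with rfl | hx
  · simpa using this
  rwa [real_inner_smul_right, real_inner_smul_right, real_inner_self_eq_norm_mul_norm,
    inv_mul_cancel_left₀ (norm_ne_zero_iff.2 hx)] at this

lemma suppFn_nonneg (hK : IsCompact K) (h0 : (0 : Euc n) ∈ K) (x : Euc n) : 0 ≤ suppFn K x := by
  simpa using inner_le_suppFn hK x h0

lemma suppFn_pos (hK : IsCompact K) {R : ℝ} (hR : 0 < R)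
    (hball : R⁻¹ • Metric.closedBall (0 : Euc n) 1 ⊆ K) {x : Euc n} (hx : x ≠ 0) :
    0 < suppFn K x :=
  (mul_pos (inv_pos.2 hR) (norm_pos_iff.2 hx)).trans_le (inv_mul_norm_le_suppFn hK hball x)

lemma abs_inner_le_mul_suppFn (hK : IsCompact K) {R : ℝ} (hR : 0 < R)
    (hball : R⁻¹ • Metric.closedBall (0 : Euc n) 1 ⊆ K) {ξ : Euc n} (hξ : ‖ξ‖ ≤ 1) (x : Euc n) :
    |inner ℝ x ξ| ≤ R * suppFn K x :=
  calc |inner ℝ x ξ| ≤ ‖x‖ * ‖ξ‖ := abs_real_inner_le_norm x ξ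
  _ ≤ ‖x‖ := mul_le_of_le_one_right (norm_nonneg x) hξ
  _ = R * (R⁻¹ * ‖x‖) := by field_simp
  _ ≤ R * suppFn K x := by gcongr; exact inv_mul_norm_le_suppFn hK hball x

lemma suppFn_le_mul_norm (hne : K.Nonempty) {M : ℝ} (hM : K ⊆ Metric.closedBall 0 M)
    (x : Euc n) : suppFn K x ≤ M * ‖x‖ := by
  refine csSup_le (hne.image _) ?_
  rintro _ ⟨y, hy, rfl⟩
  calc inner ℝ x y ≤ ‖x‖ * ‖y‖ := real_inner_le_norm x y
  _ ≤ ‖x‖ * M := by gcongr; exact mem_closedBall_zero_iff.1 (hM hy)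
  _ = M * ‖x‖ := mul_comm _ _

lemma exists_isBody_suppFn_eq_of_sublinear {g : Euc n → ℝ}
    (hsmul : ∀ t : ℝ, 0 < t → ∀ x, g (t • x) = t * g x)
    (hadd : ∀ x y, g (x + y) ≤ g x + g y) {γ C : ℝ} (hγ : 0 < γ) (hC : 0 ≤ C)
    (hlow : ∀ x, γ * ‖x‖ ≤ g x) (hup : ∀ x, g x ≤ C * ‖x‖) :
    ∃ L : Set (Euc n), IsBody L ∧ ∀ x, suppFn L x = g x := by
  set L : Set (Euc n) := ⋂ x, {y | inner ℝ x y ≤ g x}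
  have hmem : ∀ {y}, y ∈ L ↔ ∀ x, inner ℝ x y ≤ g x := mem_iInter
  have hball : Metric.ball 0 γ ⊆ L := fun y hy => hmem.2 fun x =>
    calc inner ℝ x y ≤ ‖x‖ * ‖y‖ := real_inner_le_norm x y
    _ ≤ ‖x‖ * γ := by gcongr; exact (mem_ball_zero_iff.1 hy).le
    _ = γ * ‖x‖ := mul_comm _ _
    _ ≤ g x := hlow x
  have hbdd : L ⊆ Metric.closedBall 0 C := fun y hy => by
    have h := (hmem.1 hy y).trans (hup y)
    rw [real_inner_self_eq_norm_sq] at h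
    rw [mem_closedBall_zero_iff]
    nlinarith [norm_nonneg y]
  have hclosed : IsClosed L :=
    isClosed_iInter fun x => isClosed_le (continuous_const.inner continuous_id) continuous_const
  have hcompact : IsCompact L :=
    Metric.isCompact_of_isClosed_isBounded hclosed (Metric.isBounded_closedBall.subset hbdd)
  have hconvex : Convex ℝ L :=
    convex_iInter fun x => convex_halfSpace_le (innerₗ (Euc n) x).isLinear (g x)
  refine ⟨L, ⟨hconvex, hcompact, mem_interior.2 ⟨_, hball, Metric.isOpen_ball,
    Metric.mem_ball_self hγ⟩⟩, fun x => le_antisymm ?_ ?_⟩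
  · refine csSup_le ⟨_, mem_image_of_mem _ (hball (Metric.mem_ball_self hγ))⟩ ?_
    rintro _ ⟨y, hy, rfl⟩
    exact hmem.1 hy x
  · obtain ⟨φ, hφg, hφx⟩ := exists_linearMap_le_eq_of_sublinear hsmul hadd x
    set w := (InnerProductSpace.toDual ℝ (Euc n)).symm (LinearMap.toContinuousLinearMap φ)
    have hw : ∀ u, inner ℝ u w = φ u := fun u => by
      rw [real_inner_comm]; exact InnerProductSpace.toDual_symm_apply
    calc g x = inner ℝ x w := by rw [hw, hφx]
    _ ≤ suppFn L x := inner_le_suppFn hcompact x (hmem.2 fun u => (hw u).trans_le (hφg u))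

end SupportFunction

section AdaptedPower

variable {E : Type*} [AddCommGroup E] [Module ℝ E]

noncomputable def adaptedPower (R : ℝ) (p : ℕ) (h : E → ℝ) (ℓ : E →ₗ[ℝ] ℝ) (x : E) : ℝ :=
  (p - 1) * R ^ p * h x + ℓ x ^ p / h x ^ (p - 1)

variable {R : ℝ} {p : ℕ} {h : E → ℝ} {ℓ : E →ₗ[ℝ] ℝ}

lemma adaptedPower_zero (hp : p ≠ 0) (hsmul : ∀ t : ℝ, 0 < t → ∀ x, h (t • x) = t * h x) :
    adaptedPower R p h ℓ 0 = 0 := by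
  simp [adaptedPower, apply_zero_of_smul_eq_mul hsmul, hp]

lemma adaptedPower_smul (hp : p ≠ 0) (hsmul : ∀ t : ℝ, 0 < t → ∀ x, h (t • x) = t * h x)
    (t : ℝ) (ht : 0 < t) (x : E) :
    adaptedPower R p h ℓ (t • x) = t * adaptedPower R p h ℓ x := by
  have hpow : t ^ p = t * t ^ (p - 1) := by
    rw [← pow_succ', Nat.sub_add_cancel (Nat.pos_of_ne_zero hp)]
  simp only [adaptedPower, hsmul t ht, map_smul, smul_eq_mul, mul_pow, hpow]
  field_simp

lemma mul_le_adaptedPower (hpe : Even p) {x : E} (hx : 0 ≤ h x) :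
    (p - 1) * R ^ p * h x ≤ adaptedPower R p h ℓ x :=
  le_add_of_nonneg_right (div_nonneg (hpe.pow_nonneg _) (pow_nonneg hx _))

lemma adaptedPower_nonneg (hpe : Even p) (hp : p ≠ 0) {x : E} (hx : 0 ≤ h x) :
    0 ≤ adaptedPower R p h ℓ x := by
  have : 0 ≤ (p - 1) * R ^ p * h x :=
    mul_nonneg (mul_nonneg (by linarith [hpe.two_le_natCast hp]) (hpe.pow_nonneg R)) hx
  exact this.trans (mul_le_adaptedPower hpe hx)

lemma adaptedPower_pos (hpe : Even p) (hp : p ≠ 0) (hR : R ≠ 0) {x : E} (hx : 0 < h x) :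
    0 < adaptedPower R p h ℓ x := by
  have : 0 < (p - 1) * R ^ p * h x :=
    mul_pos (mul_pos (by linarith [hpe.two_le_natCast hp]) (hpe.pow_pos hR)) hx
  exact this.trans_le (mul_le_adaptedPower hpe hx.le)

lemma adaptedPower_le (hpe : Even p) (hp : p ≠ 0) {x : E} (hx : 0 ≤ h x)
    (hℓ : |ℓ x| ≤ R * h x) : adaptedPower R p h ℓ x ≤ p * R ^ p * h x := by
  have := pow_div_pow_sub_one_le hpe hp hx hℓ
  rw [adaptedPower]
  linarith

lemma adaptedPower_add_le (hpe : Even p) (hp : p ≠ 0)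
    (hsmul : ∀ t : ℝ, 0 < t → ∀ x, h (t • x) = t * h x) (hadd : ∀ x y, h (x + y) ≤ h x + h y)
    (hpos : ∀ x, x ≠ 0 → 0 < h x) (hℓ : ∀ x, |ℓ x| ≤ R * h x) (x y : E) :
    adaptedPower R p h ℓ (x + y) ≤ adaptedPower R p h ℓ x + adaptedPower R p h ℓ y := by
  rcases eq_or_ne x 0 with rfl | hx
  · simp [adaptedPower_zero hp hsmul]
  rcases eq_or_ne y 0 with rfl | hy
  · simp [adaptedPower_zero hp hsmul]
  rcases eq_or_ne (x + y) 0 with hxy | hxy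
  · rw [hxy, adaptedPower_zero hp hsmul]
    exact add_nonneg (adaptedPower_nonneg hpe hp (hpos x hx).le)
      (adaptedPower_nonneg hpe hp (hpos y hy).le)
  calc adaptedPower R p h ℓ (x + y)
      ≤ (p - 1) * R ^ p * (h x + h y) + ℓ (x + y) ^ p / (h x + h y) ^ (p - 1) :=
        mul_add_pow_div_pow_sub_one_le_of_le hpe hp (hpos _ hxy) (hadd x y) (hℓ _)
    _ ≤ (p - 1) * R ^ p * (h x + h y) + (ℓ x ^ p / h x ^ (p - 1) + ℓ y ^ p / h y ^ (p - 1)) := by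
        rw [map_add]
        gcongr
        exact add_pow_div_add_pow_sub_one_le hpe hp (hpos x hx) (hpos y hy)
    _ = adaptedPower R p h ℓ x + adaptedPower R p h ℓ y := by
        simp only [adaptedPower]
        ring

end AdaptedPower

section AdaptedPowerNorm

variable {E : Type*} [NormedAddCommGroup E] [NormedSpace ℝ E] {R : ℝ} {p : ℕ} {h : E → ℝ}
  {ℓ : E →ₗ[ℝ] ℝ}

lemma mul_norm_le_adaptedPower (hpe : Even p) (hp : p ≠ 0) (hR : 0 < R) {x : E}
    (hx : R⁻¹ * ‖x‖ ≤ h x) : (p - 1) * R ^ p * R⁻¹ * ‖x‖ ≤ adaptedPower R p h ℓ x := by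
  have hc : 0 ≤ ((p : ℝ) - 1) * R ^ p :=
    mul_nonneg (by linarith [hpe.two_le_natCast hp]) (pow_nonneg hR.le p)
  have hx0 : 0 ≤ h x := (mul_nonneg (inv_nonneg.2 hR.le) (norm_nonneg x)).trans hx
  calc (p - 1) * R ^ p * R⁻¹ * ‖x‖ = (p - 1) * R ^ p * (R⁻¹ * ‖x‖) := mul_assoc _ _ _
  _ ≤ (p - 1) * R ^ p * h x := mul_le_mul_of_nonneg_left hx hc
  _ ≤ adaptedPower R p h ℓ x := mul_le_adaptedPower hpe hx0

lemma adaptedPower_le_mul_norm (hpe : Even p) (hp : p ≠ 0) {x : E} (hx : 0 ≤ h x)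
    (hℓ : |ℓ x| ≤ R * h x) {M : ℝ} (hM : h x ≤ M * ‖x‖) :
    adaptedPower R p h ℓ x ≤ p * R ^ p * M * ‖x‖ :=
  calc adaptedPower R p h ℓ x ≤ p * R ^ p * h x := adaptedPower_le hpe hp hx hℓ
  _ ≤ p * R ^ p * (M * ‖x‖) :=
      mul_le_mul_of_nonneg_left hM (mul_nonneg (Nat.cast_nonneg p) (hpe.pow_nonneg R))
  _ = p * R ^ p * M * ‖x‖ := by ring

end AdaptedPowerNorm

theorem adapted_power_support_function_general {n : ℕ} (K : Set (Euc n)) (hK : IsBody K)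
    (R : ℝ) (hR : 0 < R) (hball : R⁻¹ • Metric.closedBall (0 : Euc n) 1 ⊆ K)
    (p : ℕ) (hpe : Even p) (hp : 0 < p) (ξ : Euc n) (hξ : ξ ∈ sph n)
    (g : Euc n → ℝ)
    (hg : g = fun x => ((p : ℝ) - 1) * R ^ p * suppFn K x +
      (inner ℝ x ξ : ℝ) ^ p / suppFn K x ^ (p - 1)) :
    ConvexOn ℝ Set.univ g ∧
    (∀ t : ℝ, 0 < t → ∀ x : Euc n, g (t • x) = t * g x) ∧
    (∀ x : Euc n, x ≠ 0 → 0 < g x) ∧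
    ∃ L : Set (Euc n), IsBody L ∧ ∀ x : Euc n, suppFn L x = g x := by
  obtain ⟨-, hKc, hK0⟩ := hK
  have h0K : (0 : Euc n) ∈ K := interior_subset hK0
  have hpos : ∀ x, x ≠ 0 → 0 < suppFn K x := fun _ => suppFn_pos hKc hR hball
  have hℓ : ∀ x, |(innerₗ (Euc n)).flip ξ x| ≤ R * suppFn K x :=
    abs_inner_le_mul_suppFn hKc hR hball (mem_sphere_zero_iff_norm.1 hξ).le
  have hsmulK : ∀ t : ℝ, 0 < t → ∀ x, suppFn K (t • x) = t * suppFn K x :=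
    fun _ ht => suppFn_smul ht.le
  obtain rfl : g = adaptedPower R p (suppFn K) ((innerₗ (Euc n)).flip ξ) := hg
  have hsmul := adaptedPower_smul (ℓ := (innerₗ (Euc n)).flip ξ) (R := R) hp.ne' hsmulK
  have hadd := adaptedPower_add_le hpe hp.ne' hsmulK (suppFn_add_le hKc ⟨0, h0K⟩) hpos hℓ
  refine ⟨convexOn_univ_of_sublinear hsmul hadd, hsmul,
    fun x hx => adaptedPower_pos hpe hp.ne' hR.ne' (hpos x hx), ?_⟩
  obtain ⟨M, hM⟩ := hKc.isBounded.subset_closedBall 0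
  have hM0 : 0 ≤ M := (norm_nonneg _).trans (mem_closedBall_zero_iff.1 (hM h0K))
  have hγ : 0 < ((p : ℝ) - 1) * R ^ p * R⁻¹ :=
    mul_pos (mul_pos (by linarith [hpe.two_le_natCast hp.ne']) (pow_pos hR p)) (inv_pos.2 hR)
  exact exists_isBody_suppFn_eq_of_sublinear hsmul hadd hγ (by positivity : 0 ≤ p * R ^ p * M)
    (fun x => mul_norm_le_adaptedPower hpe hp.ne' hR (inv_mul_norm_le_suppFn hKc hball x))
    (fun x => adaptedPower_le_mul_norm hpe hp.ne' (suppFn_nonneg hKc h0K x) (hℓ x)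
      (suppFn_le_mul_norm ⟨0, h0K⟩ hM x))

/-- **Lemma 3.2.** For a body `K ⊇ (1/R)B₂ⁿ`, a positive even integer `p` and `ξ ∈ S^{n-1}`,
the function `x ↦ (p-1)Rᵖ h_K(x) + ⟨x,ξ⟩ᵖ/h_K(x)^{p-1}` is convex, positively 1-homogeneous and
positive outside the origin, hence the support function of a convex body with `0` in its
interior. -/
theorem adapted_power_support_function {n : ℕ} (hn : 2 ≤ n) (K : Set (Euc n)) (hK : IsBody K)
    (R : ℝ) (hR : 0 < R) (hball : R⁻¹ • Metric.closedBall (0 : Euc n) 1 ⊆ K)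
    (p : ℕ) (hpe : Even p) (hp : 0 < p) (ξ : Euc n) (hξ : ξ ∈ sph n)
    (g : Euc n → ℝ)
    (hg : g = fun x => ((p : ℝ) - 1) * R ^ p * suppFn K x +
      (inner ℝ x ξ : ℝ) ^ p / suppFn K x ^ (p - 1)) :
    ConvexOn ℝ Set.univ g ∧
    (∀ t : ℝ, 0 < t → ∀ x : Euc n, g (t • x) = t * g x) ∧
    (∀ x : Euc n, x ≠ 0 → 0 < g x) ∧
    ∃ L : Set (Euc n), IsBody L ∧ ∀ x : Euc n, suppFn L x = g x :=
  adapted_power_support_function_general K hK R hR hball p hpe hp ξ hξ g hg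
end
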